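/- arXiv:2011.02609 — 7 statements merged into one kernel-verified Lean document; each statement's English description precedes it below -/
import Mathlib

section
/- (Theorem 1.) Let B and S be disjoint nonempty finite index sets of buying and selling prosumers, with parameters a_{i,b} > 0, b_{i,b} ∈ ℝ, P̲_{i,b} < 0 for buyers and a_{i,s} > 0, b_{i,s} ∈ ℝ, P̄_{i,s} > 0 for sellers, and let λ̲ ≤ λ̄. Suppose: (i) λ̲ ≤ b̲_s ≤ b̄_s < b̲_b ≤ b̄_b ≤ λ̄; (ii) a_{i,b} > (b̄_b − b̄_s)/(−2 P̲_{i,b}) for every buyer i ∈ B; (iii) a_{i,s} > (b̲_b − b̲_s)/(2 P̄_{i,s}) for every seller i ∈ S; and (iv) (Σ_{i∈S} (1/a_{i,s}))·(b̄_s − b̲_s) < (Σ_{i∈B} (1/a_{i,b}))·(b̲_b − b̄_s) and (Σ_{i∈B} (1/a_{i,b}))·(b̄_b − b̲_b) < (Σ_{i∈S} (1/a_{i,s}))·(b̲_b − b̄_s). Then strict feasibility holds: P̲_{i,b} < P*_{i,b} < 0 for every i ∈ B and 0 < P*_{i,s} < P̄_{i,s} for every i ∈ S. -/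
/-!
The clearing price `λ*` is the average of all the `b`'s weighted by the `1 / a`'s. Bounding
each group of `b`'s by its extremes, condition (iv) places this average strictly between `b̄_s`
and `b̲_b`, which gives every `P*` its sign. Then `|λ* - b_{i,b}| < b̄_b - b̄_s` and
`|λ* - b_{i,s}| < b̲_b - b̲_s`, and (ii), (iii) turn these into the bounds `P̲_{i,b} < P*_{i,b}`
and `P*_{i,s} < P̄_{i,s}`.
-/

open Finset

section

variable {ι : Type*}

theorem Finset.sum_one_div_mul_le_sum_div {s : Finset ι} {a b : ι → ℝ} {m : ℝ}
    (ha : ∀ i ∈ s, 0 ≤ a i) (hm : ∀ i ∈ s, m ≤ b i) :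
    (∑ i ∈ s, 1 / a i) * m ≤ ∑ i ∈ s, b i / a i := by
  rw [sum_mul]
  refine sum_le_sum fun i hi => ?_
  rw [div_mul_eq_mul_div, one_mul]
  exact div_le_div_of_nonneg_right (hm i hi) (ha i hi)

theorem Finset.sum_div_le_sum_one_div_mul {s : Finset ι} {a b : ι → ℝ} {M : ℝ}
    (ha : ∀ i ∈ s, 0 ≤ a i) (hM : ∀ i ∈ s, b i ≤ M) :
    ∑ i ∈ s, b i / a i ≤ (∑ i ∈ s, 1 / a i) * M := by
  rw [sum_mul]
  refine sum_le_sum fun i hi => ?_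
  rw [div_mul_eq_mul_div, one_mul]
  exact div_le_div_of_nonneg_right (hM i hi) (ha i hi)

theorem add_pos_of_mul_lt_mul {A C u v : ℝ} (hA : 0 ≤ A) (hC : 0 ≤ C) (h : A * u < C * v) :
    0 < A + C := by
  by_contra! h0
  obtain rfl : A = 0 := by linarith
  obtain rfl : C = 0 := by linarith
  simp at h

noncomputable def clearingPrice (B S : Finset ι) (ab bb as bs : ι → ℝ) : ℝ :=
  (∑ i ∈ B, bb i / ab i + ∑ i ∈ S, bs i / as i) / (∑ i ∈ B, 1 / ab i + ∑ i ∈ S, 1 / as i)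

section clearingPrice

variable {B S : Finset ι} {ab bb as bs : ι → ℝ}

theorem lt_clearingPrice (hab : ∀ i ∈ B, 0 ≤ ab i) (has : ∀ i ∈ S, 0 ≤ as i) {mB mS x : ℝ}
    (hmB : ∀ i ∈ B, mB ≤ bb i) (hmS : ∀ i ∈ S, mS ≤ bs i)
    (h : (∑ i ∈ S, 1 / as i) * (x - mS) < (∑ i ∈ B, 1 / ab i) * (mB - x)) :
    x < clearingPrice B S ab bb as bs := by
  have hA : 0 ≤ ∑ i ∈ B, 1 / ab i := sum_nonneg fun i hi => one_div_nonneg.2 (hab i hi)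
  have hC : 0 ≤ ∑ i ∈ S, 1 / as i := sum_nonneg fun i hi => one_div_nonneg.2 (has i hi)
  have hB := sum_one_div_mul_le_sum_div hab hmB
  have hS := sum_one_div_mul_le_sum_div has hmS
  rw [clearingPrice, lt_div_iff₀ (by linarith [add_pos_of_mul_lt_mul hC hA h])]
  linarith

theorem clearingPrice_lt (hab : ∀ i ∈ B, 0 ≤ ab i) (has : ∀ i ∈ S, 0 ≤ as i) {MB MS x : ℝ}
    (hMB : ∀ i ∈ B, bb i ≤ MB) (hMS : ∀ i ∈ S, bs i ≤ MS)
    (h : (∑ i ∈ B, 1 / ab i) * (MB - x) < (∑ i ∈ S, 1 / as i) * (x - MS)) :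
    clearingPrice B S ab bb as bs < x := by
  have hA : 0 ≤ ∑ i ∈ B, 1 / ab i := sum_nonneg fun i hi => one_div_nonneg.2 (hab i hi)
  have hC : 0 ≤ ∑ i ∈ S, 1 / as i := sum_nonneg fun i hi => one_div_nonneg.2 (has i hi)
  have hB := sum_div_le_sum_one_div_mul hab hMB
  have hS := sum_div_le_sum_one_div_mul has hMS
  rw [clearingPrice, div_lt_iff₀ (add_pos_of_mul_lt_mul hA hC h)]
  linarith

end clearingPrice

section optimalPower

variable {a b P D lam : ℝ}

theorem buyer_optimalPower_mem_Ioo (ha : 0 < a) (hP : P < 0) (hD : D / (-2 * P) < a)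
    (hlo : -D ≤ lam - b) (hhi : lam < b) :
    P < (lam - b) / (2 * a) ∧ (lam - b) / (2 * a) < 0 := by
  have hDa : D < a * (-2 * P) := (div_lt_iff₀ (by linarith)).1 hD
  exact ⟨(lt_div_iff₀ (by positivity)).2 (by linarith),
    div_neg_of_neg_of_pos (by linarith) (by positivity)⟩

theorem seller_optimalPower_mem_Ioo (ha : 0 < a) (hP : 0 < P) (hD : D / (2 * P) < a)
    (hlo : b < lam) (hhi : lam - b ≤ D) :
    0 < (lam - b) / (2 * a) ∧ (lam - b) / (2 * a) < P := by
  have hDa : D < a * (2 * P) := (div_lt_iff₀ (by positivity)).1 hD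
  exact ⟨div_pos (by linarith) (by positivity), (div_lt_iff₀ (by positivity)).2 (by linarith)⟩

end optimalPower

end

theorem thm1_strict_feasibility_general {ι : Type*} (B S : Finset ι)
    (hB : B.Nonempty) (hS : S.Nonempty)
    (ab bb Pb as bs Ps : ι → ℝ)
    (hab : ∀ i ∈ B, 0 < ab i) (hPb : ∀ i ∈ B, Pb i < 0)
    (has : ∀ i ∈ S, 0 < as i) (hPs : ∀ i ∈ S, 0 < Ps i)
    (lam : ℝ)
    (hlam : lam = (∑ i ∈ B, bb i / ab i + ∑ i ∈ S, bs i / as i) /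
                  (∑ i ∈ B, 1 / ab i + ∑ i ∈ S, 1 / as i))
    (bbmin bbmax bsmin bsmax : ℝ)
    (hbbmin : bbmin = B.inf' hB bb) (hbbmax : bbmax = B.sup' hB bb)
    (hbsmin : bsmin = S.inf' hS bs) (hbsmax : bsmax = S.sup' hS bs)
    -- (ii)
    (h6 : ∀ i ∈ B, ab i > (bbmax - bsmax) / (-2 * Pb i))
    -- (iii)
    (h7 : ∀ i ∈ S, as i > (bbmin - bsmin) / (2 * Ps i))
    -- (iv)
    (h8 : (∑ i ∈ S, 1 / as i) * (bsmax - bsmin) < (∑ i ∈ B, 1 / ab i) * (bbmin - bsmax))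
    (h9 : (∑ i ∈ B, 1 / ab i) * (bbmax - bbmin) < (∑ i ∈ S, 1 / as i) * (bbmin - bsmax)) :
    (∀ i ∈ B, Pb i < (lam - bb i) / (2 * ab i) ∧ (lam - bb i) / (2 * ab i) < 0) ∧
    (∀ i ∈ S, 0 < (lam - bs i) / (2 * as i) ∧ (lam - bs i) / (2 * as i) < Ps i) := by
  have hbb_ge : ∀ i ∈ B, bbmin ≤ bb i := fun i hi => hbbmin ▸ B.inf'_le bb hi
  have hbb_le : ∀ i ∈ B, bb i ≤ bbmax := fun i hi => hbbmax ▸ B.le_sup' bb hi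
  have hbs_ge : ∀ i ∈ S, bsmin ≤ bs i := fun i hi => hbsmin ▸ S.inf'_le bs hi
  have hbs_le : ∀ i ∈ S, bs i ≤ bsmax := fun i hi => hbsmax ▸ S.le_sup' bs hi
  have hab' : ∀ i ∈ B, 0 ≤ ab i := fun i hi => (hab i hi).le
  have has' : ∀ i ∈ S, 0 ≤ as i := fun i hi => (has i hi).le
  have hlam_gt : bsmax < lam := hlam ▸ lt_clearingPrice hab' has' hbb_ge hbs_ge h8
  have hlam_lt : lam < bbmin := hlam ▸ clearingPrice_lt hab' has' hbb_le hbs_le h9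
  refine ⟨fun i hi => ?_, fun i hi => ?_⟩
  · exact buyer_optimalPower_mem_Ioo (hab i hi) (hPb i hi) (h6 i hi)
      (by linarith [hbb_le i hi]) (by linarith [hbb_ge i hi])
  · exact seller_optimalPower_mem_Ioo (has i hi) (hPs i hi) (h7 i hi)
      (by linarith [hbs_le i hi]) (by linarith [hbs_ge i hi])

/-- Theorem 1: sufficient interval conditions on the cost-function parameters of
buying and selling prosumers that guarantee strict feasibility of all P2P
energy transactions. -/
theorem thm1_strict_feasibility {ι : Type*} (B S : Finset ι) (hBS : Disjoint B S)
    (hB : B.Nonempty) (hS : S.Nonempty)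
    (ab bb Pb as bs Ps : ι → ℝ)
    (hab : ∀ i ∈ B, 0 < ab i) (hPb : ∀ i ∈ B, Pb i < 0)
    (has : ∀ i ∈ S, 0 < as i) (hPs : ∀ i ∈ S, 0 < Ps i)
    (lamL lamU : ℝ) (hlamLU : lamL ≤ lamU)
    (lam : ℝ)
    (hlam : lam = (∑ i ∈ B, bb i / ab i + ∑ i ∈ S, bs i / as i) /
                  (∑ i ∈ B, 1 / ab i + ∑ i ∈ S, 1 / as i))
    (bbmin bbmax bsmin bsmax : ℝ)
    (hbbmin : bbmin = B.inf' hB bb) (hbbmax : bbmax = B.sup' hB bb)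
    (hbsmin : bsmin = S.inf' hS bs) (hbsmax : bsmax = S.sup' hS bs)
    -- (i)
    (h1 : lamL ≤ bsmin) (h2 : bsmin ≤ bsmax) (h3 : bsmax < bbmin)
    (h4 : bbmin ≤ bbmax) (h5 : bbmax ≤ lamU)
    -- (ii)
    (h6 : ∀ i ∈ B, ab i > (bbmax - bsmax) / (-2 * Pb i))
    -- (iii)
    (h7 : ∀ i ∈ S, as i > (bbmin - bsmin) / (2 * Ps i))
    -- (iv)
    (h8 : (∑ i ∈ S, 1 / as i) * (bsmax - bsmin) < (∑ i ∈ B, 1 / ab i) * (bbmin - bsmax))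
    (h9 : (∑ i ∈ B, 1 / ab i) * (bbmax - bbmin) < (∑ i ∈ S, 1 / as i) * (bbmin - bsmax)) :
    (∀ i ∈ B, Pb i < (lam - bb i) / (2 * ab i) ∧ (lam - bb i) / (2 * ab i) < 0) ∧
    (∀ i ∈ S, 0 < (lam - bs i) / (2 * as i) ∧ (lam - bs i) / (2 * as i) < Ps i) :=
  thm1_strict_feasibility_general B S hB hS ab bb Pb as bs Ps hab hPb has hPs lam hlam bbmin bbmax
    bsmin bsmax hbbmin hbbmax hbsmin hbsmax h6 h7 h8 h9
end

section
/- Let B and S be disjoint nonempty finite index sets of buying and selling prosumers with parameters a_{i,b} > 0, b_{i,b} ∈ ℝ (buyers) and a_{i,s} > 0, b_{i,s} ∈ ℝ (sellers). If (Σ_{i∈B} (1/a_{i,b}))·(b̄_b − b̲_b) < (Σ_{i∈S} (1/a_{i,s}))·(b̲_b − b̄_s), then the market-clearing price satisfies λ* < b_{i,b} for every buyer i ∈ B, i.e., every buyer's optimal trading power P*_{i,b} = (λ* − b_{i,b})/(2a_{i,b}) is strictly negative (every buyer trades successfully). -/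
/-! `λ*` is the `1/a`-weighted mean of all the `b`'s. Bounding each buyer's `b` by `b̄_b` and each
seller's by `b̄_s`, the hypothesis says precisely that this mean falls below `b̲_b`. -/

open Finset

theorem Finset.sum_div_le_sup'_mul_sum_one_div {ι : Type*} {s : Finset ι} (hs : s.Nonempty)
    (f w : ι → ℝ) (hw : ∀ i ∈ s, 0 ≤ w i) :
    ∑ i ∈ s, f i / w i ≤ s.sup' hs f * ∑ i ∈ s, 1 / w i := by
  rw [mul_sum]
  refine sum_le_sum fun i hi => ?_
  rw [mul_one_div]
  exact div_le_div_of_nonneg_right (le_sup' f hi) (hw i hi)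

theorem add_div_add_lt_of_weighted_gap {x y W₁ W₂ M₁ M₂ m : ℝ} (hx : x ≤ M₁ * W₁)
    (hy : y ≤ M₂ * W₂) (hW : 0 < W₁ + W₂) (h : W₁ * (M₁ - m) < W₂ * (m - M₂)) :
    (x + y) / (W₁ + W₂) < m := by
  rw [div_lt_iff₀ hW]
  linarith

theorem buyers_trade_successfully_general {ι : Type*} (B S : Finset ι)
    (hB : B.Nonempty) (hS : S.Nonempty)
    (ab bb as bs : ι → ℝ)
    (hab : ∀ i ∈ B, 0 < ab i) (has : ∀ i ∈ S, 0 < as i)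
    (lam : ℝ)
    (hlam : lam = (∑ i ∈ B, bb i / ab i + ∑ i ∈ S, bs i / as i) /
                  (∑ i ∈ B, 1 / ab i + ∑ i ∈ S, 1 / as i))
    (bbmin bbmax bsmax : ℝ)
    (hbbmin : bbmin = B.inf' hB bb) (hbbmax : bbmax = B.sup' hB bb)
    (hbsmax : bsmax = S.sup' hS bs)
    (h : (∑ i ∈ B, 1 / ab i) * (bbmax - bbmin) < (∑ i ∈ S, 1 / as i) * (bbmin - bsmax)) :
    ∀ i ∈ B, lam < bb i ∧ (lam - bb i) / (2 * ab i) < 0 := by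
  intro i hi
  have hWB : 0 < ∑ j ∈ B, 1 / ab j := sum_pos (fun j hj => one_div_pos.2 (hab j hj)) hB
  have hWS : 0 ≤ ∑ j ∈ S, 1 / as j := sum_nonneg fun j hj => (one_div_pos.2 (has j hj)).le
  have hlam_lt : lam < bbmin := by
    rw [hlam]
    refine add_div_add_lt_of_weighted_gap ?_ ?_ (by positivity) h
    · exact hbbmax ▸ sum_div_le_sup'_mul_sum_one_div hB bb ab fun j hj => (hab j hj).le
    · exact hbsmax ▸ sum_div_le_sup'_mul_sum_one_div hS bs as fun j hj => (has j hj).le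
  have hlam_lt_i : lam < bb i := hlam_lt.trans_le (hbbmin ▸ inf'_le bb hi)
  exact ⟨hlam_lt_i, div_neg_of_neg_of_pos (by linarith) (by linarith [hab i hi])⟩

/-- If `(∑_B 1/a_b)·(b̄_b − b̲_b) < (∑_S 1/a_s)·(b̲_b − b̄_s)`, then every buyer
trades successfully: `λ* < b_{i,b}` for every buyer `i`. -/
theorem buyers_trade_successfully {ι : Type*} (B S : Finset ι) (hBS : Disjoint B S)
    (hB : B.Nonempty) (hS : S.Nonempty)
    (ab bb as bs : ι → ℝ)
    (hab : ∀ i ∈ B, 0 < ab i) (has : ∀ i ∈ S, 0 < as i)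
    (lam : ℝ)
    (hlam : lam = (∑ i ∈ B, bb i / ab i + ∑ i ∈ S, bs i / as i) /
                  (∑ i ∈ B, 1 / ab i + ∑ i ∈ S, 1 / as i))
    (bbmin bbmax bsmax : ℝ)
    (hbbmin : bbmin = B.inf' hB bb) (hbbmax : bbmax = B.sup' hB bb)
    (hbsmax : bsmax = S.sup' hS bs)
    (h : (∑ i ∈ B, 1 / ab i) * (bbmax - bbmin) < (∑ i ∈ S, 1 / as i) * (bbmin - bsmax)) :
    ∀ i ∈ B, lam < bb i ∧ (lam - bb i) / (2 * ab i) < 0 :=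
  buyers_trade_successfully_general B S hB hS ab bb as bs hab has lam hlam bbmin bbmax bsmax hbbmin
    hbbmax hbsmax h
end

section
/- Let B and S be disjoint nonempty finite index sets of buying and selling prosumers with parameters a_{i,b} > 0, b_{i,b} ∈ ℝ (buyers) and a_{i,s} > 0, b_{i,s} ∈ ℝ (sellers). If (Σ_{i∈B} (1/a_{i,b}))·(b̲_b − b̄_s) > (Σ_{i∈S} (1/a_{i,s}))·(b̄_s − b̲_s), then the market-clearing price satisfies λ* > b_{i,s} for every seller i ∈ S, i.e., every seller's optimal trading power P*_{i,s} = (λ* − b_{i,s})/(2a_{i,s}) is strictly positive (every seller trades successfully). -/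
open Finset

theorem Finset.inf'_mul_sum_le_sum_div {ι : Type*} {s : Finset ι} (hs : s.Nonempty)
    {a b : ι → ℝ} (ha : ∀ i ∈ s, 0 ≤ a i) :
    s.inf' hs b * ∑ i ∈ s, 1 / a i ≤ ∑ i ∈ s, b i / a i := by
  rw [mul_sum]
  refine sum_le_sum fun i hi => ?_
  rw [mul_one_div]
  exact div_le_div_of_nonneg_right (inf'_le b hi) (ha i hi)

theorem Finset.sum_one_div_pos {ι : Type*} {s : Finset ι} (hs : s.Nonempty) {a : ι → ℝ}
    (ha : ∀ i ∈ s, 0 < a i) : 0 < ∑ i ∈ s, 1 / a i :=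
  sum_pos (fun i hi => one_div_pos.2 (ha i hi)) hs

theorem sellers_trade_successfully_general {ι : Type*} (B S : Finset ι)
    (hB : B.Nonempty) (hS : S.Nonempty)
    (ab bb as bs : ι → ℝ)
    (hab : ∀ i ∈ B, 0 < ab i) (has : ∀ i ∈ S, 0 < as i)
    (lam : ℝ)
    (hlam : lam = (∑ i ∈ B, bb i / ab i + ∑ i ∈ S, bs i / as i) /
                  (∑ i ∈ B, 1 / ab i + ∑ i ∈ S, 1 / as i))
    (bbmin bsmin bsmax : ℝ)
    (hbbmin : bbmin = B.inf' hB bb)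
    (hbsmin : bsmin = S.inf' hS bs) (hbsmax : bsmax = S.sup' hS bs)
    (h : (∑ i ∈ B, 1 / ab i) * (bbmin - bsmax) > (∑ i ∈ S, 1 / as i) * (bsmax - bsmin)) :
    ∀ i ∈ S, lam > bs i ∧ 0 < (lam - bs i) / (2 * as i) := by
  have hWB := sum_one_div_pos hB hab
  have hWS := sum_one_div_pos hS has
  have hbuyers := hbbmin ▸ inf'_mul_sum_le_sum_div hB (b := bb) fun i hi => (hab i hi).le
  have hsellers := hbsmin ▸ inf'_mul_sum_le_sum_div hS (b := bs) fun i hi => (has i hi).le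
  have hmax : bsmax < lam := by
    rw [hlam, lt_div_iff₀ (add_pos hWB hWS)]
    linarith
  intro i hi
  have hlt : bs i < lam := (hbsmax ▸ le_sup' bs hi).trans_lt hmax
  exact ⟨hlt, div_pos (sub_pos.2 hlt) (mul_pos two_pos (has i hi))⟩

/-- If `(∑_B 1/a_b)·(b̲_b − b̄_s) > (∑_S 1/a_s)·(b̄_s − b̲_s)`, then every seller
trades successfully: `λ* > b_{i,s}` for every seller `i`. -/
theorem sellers_trade_successfully {ι : Type*} (B S : Finset ι) (hBS : Disjoint B S)
    (hB : B.Nonempty) (hS : S.Nonempty)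
    (ab bb as bs : ι → ℝ)
    (hab : ∀ i ∈ B, 0 < ab i) (has : ∀ i ∈ S, 0 < as i)
    (lam : ℝ)
    (hlam : lam = (∑ i ∈ B, bb i / ab i + ∑ i ∈ S, bs i / as i) /
                  (∑ i ∈ B, 1 / ab i + ∑ i ∈ S, 1 / as i))
    (bbmin bsmin bsmax : ℝ)
    (hbbmin : bbmin = B.inf' hB bb)
    (hbsmin : bsmin = S.inf' hS bs) (hbsmax : bsmax = S.sup' hS bs)
    (h : (∑ i ∈ B, 1 / ab i) * (bbmin - bsmax) > (∑ i ∈ S, 1 / as i) * (bsmax - bsmin)) :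
    ∀ i ∈ S, lam > bs i ∧ 0 < (lam - bs i) / (2 * as i) :=
  sellers_trade_successfully_general B S hB hS ab bb as bs hab has lam hlam bbmin bsmin bsmax hbbmin
    hbsmin hbsmax h
end

section
/- Let b̄_b, b̄_s, λ ∈ ℝ with λ ≥ b̄_s, let i be a buyer with parameter a_{i,b} > 0, linear parameter b_{i,b} ≤ b̄_b, and power lower bound P̲_{i,b} < 0. If a_{i,b} > (b̄_b − b̄_s)/(−2 P̲_{i,b}), then (b_{i,b} − λ)/(2 a_{i,b}) < −P̲_{i,b}. In particular, if λ = λ* is the market-clearing price and λ* ≥ b̄_s, then the buyer's optimal trading power P*_{i,b} = (λ* − b_{i,b})/(2a_{i,b}) satisfies P*_{i,b} > P̲_{i,b}, i.e., the buyer does not exceed its desired maximum buying amount. -/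
/-- A buyer with `a_{i,b} > (b̄_b − b̄_s)/(−2 P̲_{i,b})` does not exceed its desired
maximum buying amount: `(b_{i,b} − λ)/(2 a_{i,b}) < −P̲_{i,b}` (equivalently,
`(λ − b_{i,b})/(2 a_{i,b}) > P̲_{i,b}`) whenever `λ ≥ b̄_s`. -/
theorem buyer_within_bound (bbmax bsmax lam : ℝ) (hlam : lam ≥ bsmax)
    (aib bib Pib : ℝ) (haib : 0 < aib) (hbib : bib ≤ bbmax) (hPib : Pib < 0)
    (ha : aib > (bbmax - bsmax) / (-2 * Pib)) :
    (bib - lam) / (2 * aib) < -Pib ∧ Pib < (lam - bib) / (2 * aib) := by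
  have hgap : bbmax - bsmax < 2 * aib * -Pib := by
    rw [gt_iff_lt, div_lt_iff₀ (by linarith)] at ha
    linarith
  have hbuy : (bib - lam) / (2 * aib) < -Pib := by
    rw [div_lt_iff₀ (by positivity)]
    linarith
  refine ⟨hbuy, ?_⟩
  rw [← neg_sub, neg_div]
  linarith
end

section
/- Let b̲_b, b̲_s, λ ∈ ℝ with λ ≤ b̲_b, let i be a seller with parameter a_{i,s} > 0, linear parameter b_{i,s} ≥ b̲_s, and power upper bound P̄_{i,s} > 0. If a_{i,s} > (b̲_b − b̲_s)/(2 P̄_{i,s}), then (λ − b_{i,s})/(2 a_{i,s}) < P̄_{i,s}. In particular, if λ = λ* is the market-clearing price and λ* ≤ b̲_b, then the seller's optimal trading power P*_{i,s} = (λ* − b_{i,s})/(2a_{i,s}) satisfies P*_{i,s} < P̄_{i,s}, i.e., the seller does not exceed its desired maximum selling amount. -/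
/-- A seller with `a_{i,s} > (b̲_b − b̲_s)/(2 P̄_{i,s})` does not exceed its desired
maximum selling amount: `(λ − b_{i,s})/(2 a_{i,s}) < P̄_{i,s}` whenever `λ ≤ b̲_b`. -/
theorem seller_within_bound (bbmin bsmin lam : ℝ) (hlam : lam ≤ bbmin)
    (ais bis Pis : ℝ) (hais : 0 < ais) (hbis : bis ≥ bsmin) (hPis : 0 < Pis)
    (ha : ais > (bbmin - bsmin) / (2 * Pis)) :
    (lam - bis) / (2 * ais) < Pis := by
  have hgap : bbmin - bsmin < ais * (2 * Pis) := (div_lt_iff₀ (by positivity)).mp ha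
  rw [div_lt_iff₀ (by positivity)]
  linarith
end

section
/- Let B and S be disjoint nonempty finite sets, λ̲ < λ̄, k > 2, 0 < k_s < 2, 0 < k_b < 2, and suppose 2/(k_b(k−2)) < (−Σ_{i∈B} P̲_{i,b})/(Σ_{i∈S} P̄_{i,s}) < k_s(k−2)/2, where P̲_{i,b} < 0 for i ∈ B and P̄_{i,s} > 0 for i ∈ S. If (λ̄−λ̲)/(2 P̄_{i,s}) < a_{i,s} ≤ (λ̄−λ̲)/(k_s P̄_{i,s}) for every i ∈ S and (λ̄−λ̲)/(−2 P̲_{i,b}) < a_{i,b} ≤ (λ̄−λ̲)/(−k_b P̲_{i,b}) for every i ∈ B, then 1/(k−2) < (Σ_{i∈B} 1/a_{i,b})/(Σ_{i∈S} 1/a_{i,s}) < k−2. -/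
/-!
Write `D = λ̄ - λ̲`. The selection rule `D / (2|P_i|) < a_i ≤ D / (c|P_i|)` traps each `1 / a_i`
between `c|P_i| / D` and `2|P_i| / D`, so the sums of reciprocals over sellers and over buyers are
trapped between `c` and `2` times the total power bound divided by `D`. The ratio condition on the
total power bounds then leaves a factor `k - 2` between the two sums in either direction.
-/

open Finset

theorem sum_one_div_bounds_of_selection {ι : Type*} (s : Finset ι) {D c : ℝ} {p a : ι → ℝ}
    (hD : 0 < D) (hp : ∀ i ∈ s, 0 < p i)
    (ha : ∀ i ∈ s, D / (2 * p i) < a i ∧ a i ≤ D / (c * p i)) :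
    c * (∑ i ∈ s, p i) / D ≤ ∑ i ∈ s, 1 / a i ∧ ∑ i ∈ s, 1 / a i ≤ 2 * (∑ i ∈ s, p i) / D := by
  have hlo : ∀ i ∈ s, 0 < D / (2 * p i) := fun i hi => div_pos hD (by linarith [hp i hi])
  rw [mul_sum, sum_div, mul_sum, sum_div]
  constructor
  · refine sum_le_sum fun i hi => ?_
    rw [← one_div_div D (c * p i)]
    exact one_div_le_one_div_of_le ((hlo i hi).trans (ha i hi).1) (ha i hi).2
  · refine sum_le_sum fun i hi => ?_
    rw [← one_div_div D (2 * p i)]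
    exact (one_div_lt_one_div_of_lt (hlo i hi) (ha i hi).1).le

theorem lt_mul_of_le_two_mul_div {X Y P Q c m D : ℝ} (hD : 0 < D) (hm : 0 < m)
    (hX : X ≤ 2 * Q / D) (hY : c * P / D ≤ Y) (hQP : 2 * Q < c * m * P) : X < m * Y :=
  calc X ≤ 2 * Q / D := hX
    _ < c * m * P / D := div_lt_div_of_pos_right hQP hD
    _ = m * (c * P / D) := by ring
    _ ≤ m * Y := mul_le_mul_of_nonneg_left hY hm.le

theorem a_ratio_bounds_general {ι : Type*} (B S : Finset ι)
    (hS : S.Nonempty)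
    (ab Pb as Ps : ι → ℝ)
    (hPb : ∀ i ∈ B, Pb i < 0) (hPs : ∀ i ∈ S, 0 < Ps i)
    (lamL lamU : ℝ) (hlamLU : lamL < lamU)
    (k ks kb : ℝ) (hk : k > 2) (hkb : 0 < kb ∧ kb < 2)
    (hratio1 : 2 / (kb * (k - 2)) < (-∑ i ∈ B, Pb i) / (∑ i ∈ S, Ps i))
    (hratio2 : (-∑ i ∈ B, Pb i) / (∑ i ∈ S, Ps i) < ks * (k - 2) / 2)
    (has : ∀ i ∈ S, (lamU - lamL) / (2 * Ps i) < as i ∧ as i ≤ (lamU - lamL) / (ks * Ps i))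
    (hab : ∀ i ∈ B, (lamU - lamL) / (-2 * Pb i) < ab i ∧ ab i ≤ (lamU - lamL) / (-kb * Pb i)) :
    1 / (k - 2) < (∑ i ∈ B, 1 / ab i) / (∑ i ∈ S, 1 / as i) ∧
    (∑ i ∈ B, 1 / ab i) / (∑ i ∈ S, 1 / as i) < k - 2 := by
  have hD : 0 < lamU - lamL := sub_pos.2 hlamLU
  have hk2 : 0 < k - 2 := sub_pos.2 hk
  have hP : 0 < ∑ i ∈ S, Ps i := sum_pos hPs hS
  obtain ⟨hSlo, hShi⟩ := sum_one_div_bounds_of_selection S hD hPs has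
  obtain ⟨hBlo, hBhi⟩ := sum_one_div_bounds_of_selection (c := kb) B hD
    (fun i hi => neg_pos.2 (hPb i hi)) (fun i hi => by simpa only [neg_mul_comm] using hab i hi)
  rw [sum_neg_distrib] at hBlo hBhi
  have hSS : 0 < ∑ i ∈ S, 1 / as i := sum_pos (fun i hi => one_div_pos.2 <|
    (div_pos hD (mul_pos two_pos (hPs i hi))).trans (has i hi).1) hS
  have hPQ : 2 * ∑ i ∈ S, Ps i < kb * (k - 2) * -∑ i ∈ B, Pb i := by
    rw [div_lt_div_iff₀ (mul_pos hkb.1 hk2) hP] at hratio1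
    linarith
  have hQP : 2 * -∑ i ∈ B, Pb i < ks * (k - 2) * ∑ i ∈ S, Ps i := by
    rw [div_lt_iff₀ hP] at hratio2
    linarith
  constructor
  · rw [div_lt_div_iff₀ hk2 hSS, one_mul, mul_comm _ (k - 2)]
    exact lt_mul_of_le_two_mul_div hD hk2 hShi hBlo hPQ
  · rw [div_lt_iff₀ hSS]
    exact lt_mul_of_le_two_mul_div hD hk2 hBhi hSlo hQP

/-- Under the global ratio condition on total trading bounds and the decentralized
selection rules for the quadratic parameters, the ratio of the sums of reciprocal
quadratic parameters lies strictly between `1/(k−2)` and `k−2`. -/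
theorem a_ratio_bounds {ι : Type*} (B S : Finset ι) (hBS : Disjoint B S)
    (hB : B.Nonempty) (hS : S.Nonempty)
    (ab Pb as Ps : ι → ℝ)
    (hPb : ∀ i ∈ B, Pb i < 0) (hPs : ∀ i ∈ S, 0 < Ps i)
    (lamL lamU : ℝ) (hlamLU : lamL < lamU)
    (k ks kb : ℝ) (hk : k > 2) (hks : 0 < ks ∧ ks < 2) (hkb : 0 < kb ∧ kb < 2)
    (hratio1 : 2 / (kb * (k - 2)) < (-∑ i ∈ B, Pb i) / (∑ i ∈ S, Ps i))
    (hratio2 : (-∑ i ∈ B, Pb i) / (∑ i ∈ S, Ps i) < ks * (k - 2) / 2)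
    (has : ∀ i ∈ S, (lamU - lamL) / (2 * Ps i) < as i ∧ as i ≤ (lamU - lamL) / (ks * Ps i))
    (hab : ∀ i ∈ B, (lamU - lamL) / (-2 * Pb i) < ab i ∧ ab i ≤ (lamU - lamL) / (-kb * Pb i)) :
    1 / (k - 2) < (∑ i ∈ B, 1 / ab i) / (∑ i ∈ S, 1 / as i) ∧
    (∑ i ∈ B, 1 / ab i) / (∑ i ∈ S, 1 / as i) < k - 2 :=
  a_ratio_bounds_general B S hS ab Pb as Ps hPb hPs lamL lamU hlamLU k ks kb hk hkb hratio1 hratio2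
    has hab
end

section
/- (Corollary 1.) Let B and S be disjoint nonempty finite index sets of buying and selling prosumers, with parameters a_{i,b} > 0, b_{i,b} ∈ ℝ, P̲_{i,b} < 0 for buyers and a_{i,s} > 0, b_{i,s} ∈ ℝ, P̄_{i,s} > 0 for sellers, and let λ̲ < λ̄. Let k > 4 satisfy 2/(k−2) < (−Σ_{i∈B} P̲_{i,b})/(Σ_{i∈S} P̄_{i,s}) < (k−2)/2. Suppose that for every seller i ∈ S: λ̲ ≤ b_{i,s} < λ̲ + (λ̄−λ̲)/k and (λ̄−λ̲)/(2 P̄_{i,s}) < a_{i,s} ≤ (λ̄−λ̲)/P̄_{i,s}; and for every buyer i ∈ B: λ̲ + (k−1)(λ̄−λ̲)/k < b_{i,b} ≤ λ̄ and (λ̄−λ̲)/(−2 P̲_{i,b}) < a_{i,b} ≤ (λ̄−λ̲)/(−P̲_{i,b}). Then strict feasibility holds: P̲_{i,b} < P*_{i,b} < 0 for every i ∈ B and 0 < P*_{i,s} < P̄_{i,s} for every i ∈ S. -/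
/-!
Write `Δ = λ̄ - λ̲` and `u = Δ / k`. The clearing price is the mean of the bids `b_i` weighted by
`1 / a_i`, and the bounds on `a_i` pin each weight between `|P_i| / Δ` and `2 |P_i| / Δ`, so the
ratio condition makes each side's total weight at most `k - 2` times the other's. Since seller bids lie
in `[λ̲, λ̲ + u)` and buyer bids in `(λ̄ - u, λ̄]`, this forces `λ* ∈ [λ̲ + u, λ̄ - u]`: every seller
sells and every buyer buys. As every bid is within `Δ` of `λ*` and `2 a_i |P_i| > Δ`, no power limit
is reached.
-/

open Finset Set

section WeightedSums

variable {ι : Type*} {s : Finset ι}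

theorem sum_one_div_mem_Icc {a P : ι → ℝ} {Δ : ℝ} (hΔ : 0 < Δ) (hP : ∀ i ∈ s, 0 < P i)
    (ha : ∀ i ∈ s, Δ / (2 * P i) < a i ∧ a i ≤ Δ / P i) :
    ∑ i ∈ s, 1 / a i ∈ Icc ((∑ i ∈ s, P i) / Δ) (2 * (∑ i ∈ s, P i) / Δ) := by
  rw [mul_sum, sum_div, sum_div]
  refine ⟨sum_le_sum fun i hi => ?_, sum_le_sum fun i hi => ?_⟩
  all_goals
    have hpos : 0 < Δ / (2 * P i) := by have := hP i hi; positivity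
    obtain ⟨hlo, hhi⟩ := ha i hi
  · rw [← one_div_div Δ (P i)]
    exact one_div_le_one_div_of_le (hpos.trans hlo) hhi
  · rw [← one_div_div Δ (2 * P i)]
    exact one_div_le_one_div_of_le hpos hlo.le

theorem sum_div_mem_Icc {a b : ι → ℝ} {c d : ℝ} (ha : ∀ i ∈ s, 0 < a i)
    (hb : ∀ i ∈ s, b i ∈ Icc c d) :
    ∑ i ∈ s, b i / a i ∈ Icc (c * ∑ i ∈ s, 1 / a i) (d * ∑ i ∈ s, 1 / a i) := by
  rw [mul_sum, mul_sum]
  refine ⟨sum_le_sum fun i hi => ?_, sum_le_sum fun i hi => ?_⟩ <;> rw [mul_one_div]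
  · exact div_le_div_of_nonneg_right (hb i hi).1 (ha i hi).le
  · exact div_le_div_of_nonneg_right (hb i hi).2 (ha i hi).le

end WeightedSums

theorem weight_le_mul_weight {Wx Wy X Y Δ c : ℝ} (hΔ : 0 < Δ) (hc : 0 ≤ c)
    (hWx : Wx ≤ 2 * X / Δ) (hWy : Y / Δ ≤ Wy) (hXY : 2 * X ≤ c * Y) : Wx ≤ c * Wy :=
  calc Wx ≤ 2 * X / Δ := hWx
    _ ≤ c * Y / Δ := div_le_div_of_nonneg_right hXY hΔ.le
    _ = c * (Y / Δ) := mul_div_assoc c Y Δ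
    _ ≤ c * Wy := mul_le_mul_of_nonneg_left hWy hc

theorem clearing_price_mem_Icc {Wb Ws Nb Ns lamL u k : ℝ} (hW : 0 < Wb + Ws) (hu : 0 ≤ u)
    (hWs : Ws ≤ (k - 2) * Wb) (hWb : Wb ≤ (k - 2) * Ws)
    (hNb : Nb ∈ Icc ((lamL + (k - 1) * u) * Wb) ((lamL + k * u) * Wb))
    (hNs : Ns ∈ Icc (lamL * Ws) ((lamL + u) * Ws)) :
    (Nb + Ns) / (Wb + Ws) ∈ Icc (lamL + u) (lamL + (k - 1) * u) := by
  constructor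
  · rw [le_div_iff₀ hW]
    nlinarith [mul_le_mul_of_nonneg_left hWs hu, hNb.1, hNs.1]
  · rw [div_le_iff₀ hW]
    nlinarith [mul_le_mul_of_nonneg_left hWb hu, hNb.2, hNs.2]

theorem seller_power_mem_Ioo {lam b a P Δ : ℝ} (hb : b < lam) (hgap : lam - b ≤ Δ)
    (hP : 0 < P) (ha : Δ / (2 * P) < a) : (lam - b) / (2 * a) ∈ Ioo 0 P := by
  have hΔ : 0 < Δ := by linarith
  have ha0 : 0 < a := lt_trans (by positivity) ha
  have hcap : Δ < a * (2 * P) := (div_lt_iff₀ (by positivity)).1 ha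
  refine ⟨div_pos (sub_pos.2 hb) (by positivity), ?_⟩
  rw [div_lt_iff₀ (by positivity)]
  linarith

theorem buyer_power_mem_Ioo {lam b a P Δ : ℝ} (hb : lam < b) (hgap : b - lam ≤ Δ)
    (hP : P < 0) (ha : Δ / (-2 * P) < a) : (lam - b) / (2 * a) ∈ Ioo P 0 := by
  rw [neg_mul_comm] at ha
  obtain ⟨hpos, hlt⟩ := seller_power_mem_Ioo hb hgap (neg_pos.2 hP) ha
  rw [show (lam - b) / (2 * a) = -((b - lam) / (2 * a)) by ring]
  exact ⟨by linarith, by linarith⟩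

theorem coro1_strict_feasibility_general {ι : Type*} (B S : Finset ι)
    (hB : B.Nonempty) (hS : S.Nonempty)
    (ab bb Pb as bs Ps : ι → ℝ)
    (hab : ∀ i ∈ B, 0 < ab i) (hPb : ∀ i ∈ B, Pb i < 0)
    (has : ∀ i ∈ S, 0 < as i) (hPs : ∀ i ∈ S, 0 < Ps i)
    (lamL lamU : ℝ) (hlamLU : lamL < lamU)
    (lam : ℝ)
    (hlam : lam = (∑ i ∈ B, bb i / ab i + ∑ i ∈ S, bs i / as i) /
                  (∑ i ∈ B, 1 / ab i + ∑ i ∈ S, 1 / as i))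
    (k : ℝ) (hk : k > 4)
    (hratio1 : 2 / (k - 2) < (-∑ i ∈ B, Pb i) / (∑ i ∈ S, Ps i))
    (hratio2 : (-∑ i ∈ B, Pb i) / (∑ i ∈ S, Ps i) < (k - 2) / 2)
    (hbs : ∀ i ∈ S, lamL ≤ bs i ∧ bs i < lamL + (lamU - lamL) / k)
    (has2 : ∀ i ∈ S, (lamU - lamL) / (2 * Ps i) < as i ∧ as i ≤ (lamU - lamL) / Ps i)
    (hbb : ∀ i ∈ B, lamL + (k - 1) * (lamU - lamL) / k < bb i ∧ bb i ≤ lamU)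
    (hab2 : ∀ i ∈ B, (lamU - lamL) / (-2 * Pb i) < ab i ∧ ab i ≤ (lamU - lamL) / (-Pb i)) :
    (∀ i ∈ B, Pb i < (lam - bb i) / (2 * ab i) ∧ (lam - bb i) / (2 * ab i) < 0) ∧
    (∀ i ∈ S, 0 < (lam - bs i) / (2 * as i) ∧ (lam - bs i) / (2 * as i) < Ps i) := by
  set Δ := lamU - lamL
  set u := Δ / k
  have hΔ : 0 < Δ := sub_pos.2 hlamLU
  have hk2 : 0 < k - 2 := by linarith
  have hu : 0 < u := div_pos hΔ (by linarith)
  have hlamU : lamU = lamL + k * u := by simp only [u, Δ]; field_simp; ring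
  have hbb' : ∀ i ∈ B, lamL + (k - 1) * u < bb i := fun i hi => by
    simpa only [u, mul_div_assoc] using (hbb i hi).1
  have hSPs : 0 < ∑ i ∈ S, Ps i := sum_pos hPs hS
  have hWs := sum_one_div_mem_Icc hΔ hPs has2
  have hWb := sum_one_div_mem_Icc hΔ (fun i hi => neg_pos.2 (hPb i hi)) fun i hi => by
    simpa only [neg_mul_comm] using hab2 i hi
  rw [sum_neg_distrib] at hWb
  have hWs_le : ∑ i ∈ S, 1 / as i ≤ (k - 2) * ∑ i ∈ B, 1 / ab i :=
    weight_le_mul_weight hΔ hk2.le hWs.2 hWb.1 (by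
      rw [div_lt_div_iff₀ hk2 hSPs] at hratio1; linarith)
  have hWb_le : ∑ i ∈ B, 1 / ab i ≤ (k - 2) * ∑ i ∈ S, 1 / as i :=
    weight_le_mul_weight hΔ hk2.le hWb.2 hWs.1 (by
      rw [div_lt_div_iff₀ hSPs two_pos] at hratio2; linarith)
  obtain ⟨hlam_lo, hlam_hi⟩ := hlam ▸ clearing_price_mem_Icc
    (add_pos (sum_pos (fun i hi => one_div_pos.2 (hab i hi)) hB)
      (sum_pos (fun i hi => one_div_pos.2 (has i hi)) hS)) hu.le hWs_le hWb_le
    (sum_div_mem_Icc hab fun i hi => ⟨(hbb' i hi).le, hlamU ▸ (hbb i hi).2⟩)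
    (sum_div_mem_Icc has fun i hi => ⟨(hbs i hi).1, (hbs i hi).2.le⟩)
  have hlam_le : lam ≤ lamU := by rw [hlamU]; linarith
  refine ⟨fun i hi => ?_, fun i hi => ?_⟩
  · exact buyer_power_mem_Ioo (by linarith [hbb' i hi]) (by linarith [hbb' i hi, (hbb i hi).2])
      (hPb i hi) (hab2 i hi).1
  · exact seller_power_mem_Ioo (by linarith [(hbs i hi).2])
      (by linarith [(hbs i hi).1]) (hPs i hi) (has2 i hi).1

/-- Corollary 1: the special case `k_s = k_b = 1`, `k > 4` of the decentralized
parameter selection rules guarantees strict feasibility of all P2P transactions. -/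
theorem coro1_strict_feasibility {ι : Type*} (B S : Finset ι) (hBS : Disjoint B S)
    (hB : B.Nonempty) (hS : S.Nonempty)
    (ab bb Pb as bs Ps : ι → ℝ)
    (hab : ∀ i ∈ B, 0 < ab i) (hPb : ∀ i ∈ B, Pb i < 0)
    (has : ∀ i ∈ S, 0 < as i) (hPs : ∀ i ∈ S, 0 < Ps i)
    (lamL lamU : ℝ) (hlamLU : lamL < lamU)
    (lam : ℝ)
    (hlam : lam = (∑ i ∈ B, bb i / ab i + ∑ i ∈ S, bs i / as i) /
                  (∑ i ∈ B, 1 / ab i + ∑ i ∈ S, 1 / as i))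
    (k : ℝ) (hk : k > 4)
    (hratio1 : 2 / (k - 2) < (-∑ i ∈ B, Pb i) / (∑ i ∈ S, Ps i))
    (hratio2 : (-∑ i ∈ B, Pb i) / (∑ i ∈ S, Ps i) < (k - 2) / 2)
    (hbs : ∀ i ∈ S, lamL ≤ bs i ∧ bs i < lamL + (lamU - lamL) / k)
    (has2 : ∀ i ∈ S, (lamU - lamL) / (2 * Ps i) < as i ∧ as i ≤ (lamU - lamL) / Ps i)
    (hbb : ∀ i ∈ B, lamL + (k - 1) * (lamU - lamL) / k < bb i ∧ bb i ≤ lamU)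
    (hab2 : ∀ i ∈ B, (lamU - lamL) / (-2 * Pb i) < ab i ∧ ab i ≤ (lamU - lamL) / (-Pb i)) :
    (∀ i ∈ B, Pb i < (lam - bb i) / (2 * ab i) ∧ (lam - bb i) / (2 * ab i) < 0) ∧
    (∀ i ∈ S, 0 < (lam - bs i) / (2 * as i) ∧ (lam - bs i) / (2 * as i) < Ps i) :=
  coro1_strict_feasibility_general B S hB hS ab bb Pb as bs Ps hab hPb has hPs lamL lamU hlamLU lam
    hlam k hk hratio1 hratio2 hbs has2 hbb hab2
end
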